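/- arXiv:2111.04725 — 2 statements merged into one kernel-verified Lean document; each statement's English description precedes it below -/
import Mathlib

section
/- Let G be a finite group, χ the character of a finite-dimensional complex representation of G, and d ≥ 3 an integer; set Δ = (d−2)/2. For β > 0 and g ∈ G, the series L(β,g) = Σ_{n=1}^∞ (e^{−nβΔ}/n) (χ(gⁿ) + conj(χ(gⁿ))) (1 − e^{−2nβ})/(1 − e^{−nβ})ᵈ converges absolutely, and lim_{β→0⁺} β^{d−1} L(β,g) = 4 Σ_{n=1}^∞ Re χ(gⁿ)/nᵈ, where the series on the right converges absolutely. -/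
/-!
The `n`-th term of `L(β, g)` is `(2 Re χ(gⁿ) / n) f(nβ)`, where `f` is the character of the free
scalar field. Since `(1 - e^{-x}) / x → 1`, `x^{d-1} f(x) → 2` as `x → 0⁺`, and `x^{d-1} f(x)` is
bounded on `x > 0` because `e^{-xΔ} (1 + x)^{d-1}` is once `Δ ≥ 1/2`. Hence `β^{d-1}` times the
`n`-th term tends to `4 Re χ(gⁿ) / nᵈ` and is dominated by `C / nᵈ`, as `χ` takes finitely many
values; dominated convergence (Tannery's theorem) gives the limit.
-/

/-- The `n`-th term (indexing `n : ℕ` corresponds to `n + 1 ≥ 1`) of the series defining the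
logarithm `L(β, g)` of the twisted partition function of a free scalar on `S^{d-1} × S¹_β`:
`(e^{-nβΔ}/n) (χ(gⁿ) + conj χ(gⁿ)) (1 - e^{-2nβ})/(1 - e^{-nβ})ᵈ` with `Δ = (d-2)/2`. -/
noncomputable def freeScalarLogTerm {G : Type*} [Group G] (χ : G → ℂ) (d : ℕ)
    (β : ℝ) (g : G) (n : ℕ) : ℂ :=
  ((Real.exp (-(((n : ℝ) + 1) * β * (((d : ℝ) - 2) / 2))) / ((n : ℝ) + 1) : ℝ) : ℂ) *
    (χ (g ^ (n + 1)) + star (χ (g ^ (n + 1)))) *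
    (((1 - Real.exp (-(2 * ((n : ℝ) + 1) * β))) /
        (1 - Real.exp (-(((n : ℝ) + 1) * β))) ^ d : ℝ) : ℂ)

/-- `L(β, g) = Σ_{n=1}^∞ (e^{-nβΔ}/n) (χ(gⁿ) + conj χ(gⁿ)) (1 - e^{-2nβ})/(1 - e^{-nβ})ᵈ`. -/
noncomputable def freeScalarLog {G : Type*} [Group G] (χ : G → ℂ) (d : ℕ)
    (β : ℝ) (g : G) : ℂ :=
  ∑' n : ℕ, freeScalarLogTerm χ d β g n

open Real Filter Topology

/-- `q ^ Δ (1 - q²) / (1 - q) ^ d` at `q = e^{-x}`: the character of the free scalar field, i.e. its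
single-particle partition function on `S^{d-1}` at inverse temperature `x`. -/
noncomputable def freeScalarCharacter (d : ℕ) (x : ℝ) : ℝ :=
  exp (-(x * (((d : ℝ) - 2) / 2))) * ((1 - exp (-(2 * x))) / (1 - exp (-x)) ^ d)

lemma freeScalarLogTerm_eq {G : Type*} [Group G] (χ : G → ℂ) (d : ℕ) (β : ℝ) (g : G) (n : ℕ) :
    freeScalarLogTerm χ d β g n =
      ((2 * (χ (g ^ (n + 1))).re / ((n : ℝ) + 1) *
        freeScalarCharacter d (((n : ℝ) + 1) * β) : ℝ) : ℂ) := by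
  rw [freeScalarLogTerm, freeScalarCharacter, Complex.star_def, Complex.add_conj, mul_assoc 2]
  push_cast
  ring

lemma one_sub_exp_neg_pos {x : ℝ} (hx : 0 < x) : 0 < 1 - exp (-x) :=
  sub_pos.2 (exp_lt_one_iff.2 (neg_neg_of_pos hx))

lemma pow_mul_freeScalarCharacter_eq {d : ℕ} (hd : 1 ≤ d) {x : ℝ} (hx : 0 < x) :
    x ^ (d - 1) * freeScalarCharacter d x =
      exp (-(x * (((d : ℝ) - 2) / 2))) * (1 + exp (-x)) * (x / (1 - exp (-x))) ^ (d - 1) := by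
  obtain ⟨k, rfl⟩ := Nat.exists_eq_add_of_le' hd
  have hq := (one_sub_exp_neg_pos hx).ne'
  have hfactor : 1 - exp (-(2 * x)) = (1 - exp (-x)) * (1 + exp (-x)) := by
    rw [show -(2 * x) = -x + -x by ring, exp_add]
    ring
  rw [freeScalarCharacter, hfactor, div_pow, Nat.add_sub_cancel]
  field_simp
  ring

lemma tendsto_div_one_sub_exp_neg : Tendsto (fun x : ℝ => x / (1 - exp (-x))) (𝓝[>] 0) (𝓝 1) := by
  have hslope : Tendsto (fun x : ℝ => x⁻¹ * (exp (-x) - 1)) (𝓝[>] 0) (𝓝 (-1)) := by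
    simpa using ((hasDerivAt_neg (0 : ℝ)).exp).tendsto_slope_zero_right
  have hlim := hslope.neg.inv₀ (by norm_num)
  rw [neg_neg, inv_one] at hlim
  refine hlim.congr fun x => ?_
  rw [← mul_neg, neg_sub, mul_inv, inv_inv, div_eq_mul_inv]

lemma div_one_sub_exp_neg_le {x : ℝ} (hx : 0 < x) : x / (1 - exp (-x)) ≤ 1 + x := by
  rw [div_le_iff₀ (one_sub_exp_neg_pos hx)]
  have h := mul_le_mul_of_nonneg_right (add_one_le_exp x) (exp_pos (-x)).le
  rw [← exp_add, add_neg_cancel, exp_zero] at h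
  linarith

lemma one_add_pow_le_mul_exp_half {k : ℕ} (hk : 1 ≤ k) {x : ℝ} (hx : 0 ≤ x) :
    (1 + x) ^ k ≤ (2 * k) ^ k * exp (x / 2) := by
  have hk' : (1 : ℝ) ≤ k := by exact_mod_cast hk
  have hbase : 1 + x ≤ 2 * k * exp (x / (2 * k)) := by
    calc 1 + x ≤ 2 * k * (x / (2 * k) + 1) := by
          rw [mul_add, mul_div_cancel₀ _ (by positivity)]
          linarith
      _ ≤ 2 * k * exp (x / (2 * k)) := by gcongr; exact add_one_le_exp _
  calc (1 + x) ^ k ≤ (2 * k * exp (x / (2 * k))) ^ k := by gcongr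
    _ = (2 * k) ^ k * exp (x / 2) := by
      rw [mul_pow, ← exp_nat_mul]
      field_simp

lemma exists_abs_pow_mul_freeScalarCharacter_le {d : ℕ} (hd : 3 ≤ d) :
    ∃ B, ∀ x, 0 < x → |x ^ (d - 1) * freeScalarCharacter d x| ≤ B := by
  refine ⟨2 * (2 * ((d - 1 : ℕ) : ℝ)) ^ (d - 1), fun x hx => ?_⟩
  have hq := one_sub_exp_neg_pos hx
  have hΔ : x / 2 ≤ x * (((d : ℝ) - 2) / 2) := by
    have : (3 : ℝ) ≤ d := by exact_mod_cast hd
    nlinarith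
  rw [pow_mul_freeScalarCharacter_eq (by omega) hx, abs_of_nonneg (by positivity)]
  calc exp (-(x * (((d : ℝ) - 2) / 2))) * (1 + exp (-x)) * (x / (1 - exp (-x))) ^ (d - 1)
      ≤ exp (-(x / 2)) * 2 * (1 + x) ^ (d - 1) := by
        gcongr
        · linarith [exp_le_one_iff.2 (neg_nonpos.2 hx.le)]
        · exact div_one_sub_exp_neg_le hx
    _ ≤ exp (-(x / 2)) * 2 * ((2 * ((d - 1 : ℕ) : ℝ)) ^ (d - 1) * exp (x / 2)) := by
        gcongr
        exact one_add_pow_le_mul_exp_half (by omega) hx.le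
    _ = 2 * (2 * ((d - 1 : ℕ) : ℝ)) ^ (d - 1) := by
        rw [exp_neg]
        field_simp

lemma tendsto_pow_mul_freeScalarCharacter {d : ℕ} (hd : 1 ≤ d) :
    Tendsto (fun x => x ^ (d - 1) * freeScalarCharacter d x) (𝓝[>] 0) (𝓝 2) := by
  have hcont : Tendsto (fun x => exp (-(x * (((d : ℝ) - 2) / 2))) * (1 + exp (-x)))
      (𝓝[>] 0) (𝓝 2) := by
    have : Continuous fun x => exp (-(x * (((d : ℝ) - 2) / 2))) * (1 + exp (-x)) := by fun_prop
    simpa [one_add_one_eq_two] using (this.tendsto 0).mono_left nhdsWithin_le_nhds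
  have hlim := hcont.mul (tendsto_div_one_sub_exp_neg.pow (d - 1))
  rw [one_pow, mul_one] at hlim
  refine hlim.congr' ?_
  filter_upwards [self_mem_nhdsWithin] with x hx
  exact (pow_mul_freeScalarCharacter_eq hd hx).symm

lemma summable_one_div_nat_add_one_pow {p : ℕ} (hp : 1 < p) :
    Summable fun n : ℕ => 1 / ((n : ℝ) + 1) ^ p := by
  exact_mod_cast (summable_nat_add_iff 1).mpr (Real.summable_one_div_nat_pow.mpr hp)

lemma pow_mul_div_mul_freeScalarCharacter {d : ℕ} (hd : 1 ≤ d) {m : ℝ} (hm : m ≠ 0) (c β : ℝ) :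
    β ^ (d - 1) * (c / m * freeScalarCharacter d (m * β)) =
      c / m ^ d * ((m * β) ^ (d - 1) * freeScalarCharacter d (m * β)) := by
  obtain ⟨k, rfl⟩ := Nat.exists_eq_add_of_le' hd
  rw [Nat.add_sub_cancel, mul_pow]
  field_simp
  ring

lemma abs_pow_mul_div_mul_freeScalarCharacter_le {d : ℕ} (hd : 1 ≤ d) {B : ℝ}
    (hB : ∀ x, 0 < x → |x ^ (d - 1) * freeScalarCharacter d x| ≤ B) {c C : ℝ} (hc : |c| ≤ C)
    {m β : ℝ} (hm : 0 < m) (hβ : 0 < β) :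
    |β ^ (d - 1) * (c / m * freeScalarCharacter d (m * β))| ≤ C * B / m ^ d := by
  rw [pow_mul_div_mul_freeScalarCharacter hd hm.ne', abs_mul, abs_div,
    abs_of_pos (pow_pos hm d), div_mul_eq_mul_div]
  gcongr
  · exact (abs_nonneg c).trans hc
  · exact hB _ (mul_pos hm hβ)

lemma summable_abs_div_mul_freeScalarCharacter {d : ℕ} (hd : 3 ≤ d) {a : ℕ → ℝ} {C : ℝ}
    (ha : ∀ n, |a n| ≤ C) {β : ℝ} (hβ : 0 < β) :
    Summable fun n : ℕ => |a n / ((n : ℝ) + 1) * freeScalarCharacter d (((n : ℝ) + 1) * β)| := by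
  obtain ⟨B, hB⟩ := exists_abs_pow_mul_freeScalarCharacter_le hd
  refine Summable.of_nonneg_of_le (fun n => abs_nonneg _) (fun n => ?_)
    ((summable_one_div_nat_add_one_pow (by omega : 1 < d)).mul_left (C * B / β ^ (d - 1)))
  have hscaled := abs_pow_mul_div_mul_freeScalarCharacter_le (by omega) hB (ha n)
    (Nat.cast_add_one_pos n) hβ
  rw [abs_mul, abs_of_pos (pow_pos hβ _), ← le_div_iff₀' (pow_pos hβ _)] at hscaled
  exact hscaled.trans_eq (by ring)

lemma tendsto_pow_mul_tsum_div_mul_freeScalarCharacter {d : ℕ} (hd : 3 ≤ d) {a : ℕ → ℝ} {C : ℝ}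
    (ha : ∀ n, |a n| ≤ C) :
    Tendsto (fun β => β ^ (d - 1) *
        ∑' n : ℕ, a n / ((n : ℝ) + 1) * freeScalarCharacter d (((n : ℝ) + 1) * β))
      (𝓝[>] 0) (𝓝 (2 * ∑' n : ℕ, a n / ((n : ℝ) + 1) ^ d)) := by
  obtain ⟨B, hB⟩ := exists_abs_pow_mul_freeScalarCharacter_le hd
  simp only [← tsum_mul_left]
  refine tendsto_tsum_of_dominated_convergence
    ((summable_one_div_nat_add_one_pow (by omega : 1 < d)).mul_left (C * B)) (fun n => ?_) ?_
  · have hm := Nat.cast_add_one_pos (α := ℝ) n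
    have hscale : Tendsto (fun β => ((n : ℝ) + 1) * β) (𝓝[>] 0) (𝓝[>] 0) := by
      simpa using TendstoNhdsWithinIoi.const_mul (c := (0 : ℝ)) hm tendsto_id
    have hlim := ((tendsto_pow_mul_freeScalarCharacter (d := d) (by omega)).comp hscale).const_mul
      (a n / ((n : ℝ) + 1) ^ d)
    rw [mul_comm 2]
    refine hlim.congr fun β => ?_
    exact (pow_mul_div_mul_freeScalarCharacter (d := d) (by omega) hm.ne' _ _).symm
  · filter_upwards [self_mem_nhdsWithin] with β hβ n
    rw [Real.norm_eq_abs, mul_one_div]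
    exact abs_pow_mul_div_mul_freeScalarCharacter_le (d := d) (by omega) hB (ha n)
      (Nat.cast_add_one_pos n) hβ

theorem freeScalarLog_asymptotics_general
    {G : Type*} [Group G] [Fintype G]
    {V : Type*} [AddCommGroup V] [Module ℂ V]
    (ρ : Representation ℂ G V) (d : ℕ) (hd : 3 ≤ d) (g : G) :
    (∀ β : ℝ, 0 < β →
      Summable (fun n : ℕ =>
        ‖freeScalarLogTerm (fun h => LinearMap.trace ℂ V (ρ h)) d β g n‖)) ∧
    Summable (fun n : ℕ =>
      |(LinearMap.trace ℂ V (ρ (g ^ (n + 1)))).re| / ((n : ℝ) + 1) ^ d) ∧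
    Filter.Tendsto
      (fun β : ℝ => (β : ℂ) ^ (d - 1) *
        freeScalarLog (fun h => LinearMap.trace ℂ V (ρ h)) d β g)
      (nhdsWithin 0 (Set.Ioi 0))
      (nhds (4 * ∑' n : ℕ,
        (((LinearMap.trace ℂ V (ρ (g ^ (n + 1)))).re / ((n : ℝ) + 1) ^ d : ℝ) : ℂ))) := by
  obtain ⟨C, hC⟩ := (Set.finite_range fun h => |(LinearMap.trace ℂ V (ρ h)).re|).bddAbove
  have hχ (n : ℕ) : |(LinearMap.trace ℂ V (ρ (g ^ (n + 1)))).re| ≤ C := hC ⟨_, rfl⟩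
  have ha (n : ℕ) : |2 * (LinearMap.trace ℂ V (ρ (g ^ (n + 1)))).re| ≤ 2 * C := by
    rw [abs_mul, abs_two]
    gcongr
    exact hχ n
  simp only [freeScalarLog, freeScalarLogTerm_eq, Complex.norm_real, Real.norm_eq_abs]
  refine ⟨fun β hβ => summable_abs_div_mul_freeScalarCharacter hd ha hβ, ?_, ?_⟩
  · refine ((summable_one_div_nat_add_one_pow (by omega : 1 < d)).mul_left C).of_nonneg_of_le
      (fun n => by positivity) fun n => ?_
    rw [mul_one_div]
    gcongr
    exact hχ n
  · convert (tendsto_pow_mul_tsum_div_mul_freeScalarCharacter hd ha).ofReal using 2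
    · push_cast [Complex.ofReal_tsum]
      rfl
    · simp only [mul_div_assoc, tsum_mul_left, Complex.ofReal_mul, Complex.ofReal_tsum]
      push_cast
      ring

/-- For the character `χ` of a finite-dimensional complex representation of a
finite group `G`, an integer `d ≥ 3`, and `g ∈ G`, the series defining `L(β, g)` converges
absolutely for every `β > 0`, and `β^{d-1} L(β, g) → 4 Σ_{n≥1} Re χ(gⁿ)/nᵈ` as `β → 0⁺`,
the latter series converging absolutely. -/
theorem freeScalarLog_asymptotics
    {G : Type*} [Group G] [Fintype G]
    {V : Type*} [AddCommGroup V] [Module ℂ V] [FiniteDimensional ℂ V]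
    (ρ : Representation ℂ G V) (d : ℕ) (hd : 3 ≤ d) (g : G) :
    (∀ β : ℝ, 0 < β →
      Summable (fun n : ℕ =>
        ‖freeScalarLogTerm (fun h => LinearMap.trace ℂ V (ρ h)) d β g n‖)) ∧
    Summable (fun n : ℕ =>
      |(LinearMap.trace ℂ V (ρ (g ^ (n + 1)))).re| / ((n : ℝ) + 1) ^ d) ∧
    Filter.Tendsto
      (fun β : ℝ => (β : ℂ) ^ (d - 1) *
        freeScalarLog (fun h => LinearMap.trace ℂ V (ρ h)) d β g)
      (nhdsWithin 0 (Set.Ioi 0))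
      (nhds (4 * ∑' n : ℕ,
        (((LinearMap.trace ℂ V (ρ (g ^ (n + 1)))).re / ((n : ℝ) + 1) ^ d : ℝ) : ℂ))) :=
  freeScalarLog_asymptotics_general ρ d hd g
end

section
/- Let G be a finite group, χ the character of a faithful finite-dimensional complex representation of G, and d ≥ 2 an integer. Let I : (0,∞) → ℝ satisfy: I(β) ≥ 0 for all β > 0; there is a constant C > 0 with I(β) ≤ C β^{1−d} for all β > 0; and lim_{β→0⁺} β^{d−1} I(β) = c for some c > 0. For β > 0 and g ∈ G define Z(β,g) = exp(Σ_{n=1}^∞ (1/n)(χ(gⁿ) + conj(χ(gⁿ))) I(nβ)) (the series converges absolutely). Then for every irreducible complex representation α of G with character χ_α, lim_{β→0⁺} [(dim α/|G|) Σ_{g∈G} conj(χ_α(g)) Z(β,g)] / Z(β,1) = dim(α)²/|G|, where 1 is the identity of G. -/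
/-- The `n`-th term (indexing `n : ℕ` corresponds to `n + 1 ≥ 1`) of the plethystic exponent:
`(1/n)(χ(gⁿ) + conj χ(gⁿ)) I(nβ)`, where `I` is a single-particle partition function. -/
noncomputable def plethTerm {G : Type*} [Group G] (χ : G → ℂ) (I : ℝ → ℝ)
    (β : ℝ) (g : G) (n : ℕ) : ℂ :=
  (1 / ((n : ℂ) + 1)) * (χ (g ^ (n + 1)) + star (χ (g ^ (n + 1)))) *
    ((I (((n : ℝ) + 1) * β) : ℝ) : ℂ)

/-- The plethystic exponential `Z(β, g) = exp (Σ_{n≥1} (1/n)(χ(gⁿ) + conj χ(gⁿ)) I(nβ))`. -/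
noncomputable def plethZ {G : Type*} [Group G] (χ : G → ℂ) (I : ℝ → ℝ)
    (β : ℝ) (g : G) : ℂ :=
  Complex.exp (∑' n : ℕ, plethTerm χ I β g n)

/-! Every eigenvalue of `ρ g` is a root of unity, so `Re χ(g) ≤ χ(1) = dim V`, with equality
only if `ρ g = 1`, i.e. by faithfulness only if `g = 1`. Hence for `g ≠ 1` the exponent of
`Z(β, g) / Z(β, 1)` is at most `-2 (dim V - Re χ(g)) I(β)`, which tends to `-∞` since
`I(β) ~ c β^{1-d}`. Only the `g = 1` term of the reduced partition function survives, and it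
equals `(dim α / |G|) · dim α`. -/

open Polynomial Filter Topology

namespace Module.End

lemma HasEigenvalue.pow_eq_one_of_pow_eq_one {K V : Type*} [Field K] [AddCommGroup V]
    [Module K V] {f : End K V} {m : ℕ} (hf : f ^ m = 1) {μ : K} (hμ : f.HasEigenvalue μ) :
    μ ^ m = 1 := by
  obtain ⟨v, hv⟩ := hμ.exists_hasEigenvector
  have hv_fixed : μ ^ m • v = (1 : K) • v := by rw [← hv.pow_apply, hf, one_smul, one_apply]
  exact smul_left_injective K hv.2 hv_fixed

variable {V : Type*} [AddCommGroup V] [Module ℂ V] [FiniteDimensional ℂ V] {f : End ℂ V} {m : ℕ}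

lemma norm_eq_one_of_mem_roots_charpoly (hm : m ≠ 0) (hf : f ^ m = 1) {μ : ℂ}
    (hμ : μ ∈ f.charpoly.roots) : ‖μ‖ = 1 := by
  have hμ' : f.HasEigenvalue μ :=
    (hasEigenvalue_iff_isRoot_charpoly f μ).2 (mem_roots'.1 hμ).2
  exact Complex.norm_eq_one_of_pow_eq_one (hμ'.pow_eq_one_of_pow_eq_one hf) hm

variable (f) in
lemma trace_eq_sum_roots_charpoly : LinearMap.trace ℂ V f = f.charpoly.roots.sum :=
  trace_eq_sum_roots_charpoly_of_splits (IsAlgClosed.splits _)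

variable (f) in
lemma card_roots_charpoly : f.charpoly.roots.card = Module.finrank ℂ V := by
  rw [← Splits.natDegree_eq_card_roots (IsAlgClosed.splits _), LinearMap.charpoly_natDegree]

lemma norm_trace_le_of_pow_eq_one (hm : m ≠ 0) (hf : f ^ m = 1) :
    ‖LinearMap.trace ℂ V f‖ ≤ Module.finrank ℂ V := by
  rw [trace_eq_sum_roots_charpoly, ← card_roots_charpoly f]
  refine (norm_multiset_sum_le _).trans ?_
  simpa using Multiset.sum_le_card_nsmul (f.charpoly.roots.map (‖·‖)) 1 fun x hx => by
    obtain ⟨μ, hμ, rfl⟩ := Multiset.mem_map.1 hx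
    exact (norm_eq_one_of_mem_roots_charpoly hm hf hμ).le

/-- `X ^ m - 1` is squarefree, so `f` is semisimple, while `f - 1` is nilpotent. -/
lemma eq_one_of_pow_eq_one_of_roots_charpoly (hm : m ≠ 0) (hf : f ^ m = 1)
    (hroots : ∀ μ ∈ f.charpoly.roots, μ = 1) : f = 1 := by
  have hsemisimple : f.IsSemisimple := by
    refine isSemisimple_of_squarefree_aeval_eq_zero (p := X ^ m - 1) ?_ (by simp [hf])
    exact (X_pow_sub_one_separable_iff.2 (by exact_mod_cast hm)).squarefree
  have hcharpoly : f.charpoly = (X - C 1) ^ Module.finrank ℂ V := by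
    rw [(IsAlgClosed.splits f.charpoly).eq_prod_roots_of_monic f.charpoly_monic,
      Multiset.eq_replicate.2 ⟨card_roots_charpoly f, hroots⟩]
    simp
  have hnilpotent : IsNilpotent (f - 1) :=
    ⟨Module.finrank ℂ V, by simpa [hcharpoly] using f.aeval_self_charpoly⟩
  have hsemisimple' : (f - 1).IsSemisimple := by
    simpa using (isSemisimple_sub_algebraMap_iff (μ := (1 : ℂ))).2 hsemisimple
  exact sub_eq_zero.1 (eq_zero_of_isNilpotent_isSemisimple hnilpotent hsemisimple')

lemma re_trace_lt_of_pow_eq_one (hm : m ≠ 0) (hf : f ^ m = 1) (hne : f ≠ 1) :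
    (LinearMap.trace ℂ V f).re < Module.finrank ℂ V := by
  obtain ⟨μ, hμ, hμ1⟩ : ∃ μ ∈ f.charpoly.roots, μ ≠ 1 := by
    by_contra! h
    exact hne (eq_one_of_pow_eq_one_of_roots_charpoly hm hf h)
  have hre_le : ∀ ν ∈ f.charpoly.roots, ν.re ≤ 1 := fun ν hν =>
    (Complex.re_le_norm ν).trans (norm_eq_one_of_mem_roots_charpoly hm hf hν).le
  have hre_lt : μ.re < 1 := by
    refine (hre_le μ hμ).lt_of_ne fun h => hμ1 ?_
    have him : μ.im = 0 :=
      Complex.abs_re_eq_norm.1 (by rw [h, norm_eq_one_of_mem_roots_charpoly hm hf hμ, abs_one])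
    exact Complex.ext (by simp [h]) (by simp [him])
  have hre_sum : (f.charpoly.roots.sum).re = (f.charpoly.roots.map Complex.re).sum :=
    map_multiset_sum Complex.reAddGroupHom _
  rw [trace_eq_sum_roots_charpoly, hre_sum, ← card_roots_charpoly f]
  simpa using Multiset.sum_lt_sum (g := fun _ => (1 : ℝ)) hre_le ⟨μ, hμ, hre_lt⟩

end Module.End

namespace Representation

variable {G : Type*} [Group G] {V : Type*} [AddCommGroup V] [Module ℂ V]
  (ρ : Representation ℂ G V)

lemma pow_orderOf_eq_one (g : G) : ρ g ^ orderOf g = 1 := by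
  rw [← map_pow, _root_.pow_orderOf_eq_one, map_one]

variable [Finite G] [FiniteDimensional ℂ V]

lemma norm_trace_le_finrank (g : G) :
    ‖LinearMap.trace ℂ V (ρ g)‖ ≤ Module.finrank ℂ V :=
  Module.End.norm_trace_le_of_pow_eq_one (orderOf_pos g).ne' (ρ.pow_orderOf_eq_one g)

lemma re_trace_lt_finrank {g : G} (hg : ρ g ≠ 1) :
    (LinearMap.trace ℂ V (ρ g)).re < Module.finrank ℂ V :=
  Module.End.re_trace_lt_of_pow_eq_one (orderOf_pos g).ne' (ρ.pow_orderOf_eq_one g) hg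

end Representation

lemma tendsto_atTop_of_tendsto_pow_mul {I : ℝ → ℝ} {k : ℕ} (hk : k ≠ 0) {c : ℝ} (hc : 0 < c)
    (hI : Tendsto (fun β => β ^ k * I β) (𝓝[>] 0) (𝓝 c)) : Tendsto I (𝓝[>] 0) atTop := by
  have hinv_pow : Tendsto (fun β : ℝ => β⁻¹ ^ k) (𝓝[>] 0) atTop :=
    (tendsto_pow_atTop hk).comp tendsto_inv_nhdsGT_zero
  refine (hI.pos_mul_atTop hc hinv_pow).congr' ?_
  filter_upwards [self_mem_nhdsWithin] with β (hβ : 0 < β)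
  rw [inv_pow, mul_right_comm, mul_inv_cancel₀ (pow_ne_zero k hβ.ne'), one_mul]

section PlethysticExponential

variable {G : Type*} [Group G] {χ : G → ℂ} {I : ℝ → ℝ}

variable (χ I) in
lemma plethTerm_eq_ofReal (β : ℝ) (g : G) (n : ℕ) :
    plethTerm χ I β g n = ((2 * (χ (g ^ (n + 1))).re * I ((n + 1) * β) / (n + 1) : ℝ) : ℂ) := by
  rw [plethTerm, Complex.star_def, Complex.add_conj]
  push_cast
  ring

lemma summable_norm_plethTerm {D : ℝ} (hχ : ∀ h, ‖χ h‖ ≤ D) (hI0 : ∀ β, 0 < β → 0 ≤ I β)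
    {C s : ℝ} (hs : 1 < s) (hIC : ∀ β, 0 < β → I β ≤ C * β ^ (1 - s)) {β : ℝ} (hβ : 0 < β)
    (g : G) : Summable fun n => ‖plethTerm χ I β g n‖ := by
  have hD : 0 ≤ D := (norm_nonneg _).trans (hχ 1)
  have hzeta : Summable fun n : ℕ => ((n : ℝ) + 1) ^ (-s) := by
    simpa using (summable_nat_add_iff 1).2 (Real.summable_nat_rpow.2 (neg_lt_neg hs))
  refine .of_nonneg_of_le (fun n => norm_nonneg _) (fun n => ?_)
    (hzeta.mul_left (2 * D * C * β ^ (1 - s)))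
  set x : ℝ := n + 1
  have hx : 0 < x := by positivity
  have hxβ : 0 < x * β := by positivity
  have hre : |2 * (χ (g ^ (n + 1))).re| ≤ 2 * D := by
    rw [abs_mul, abs_two]
    gcongr
    exact (Complex.abs_re_le_norm _).trans (hχ _)
  calc ‖plethTerm χ I β g n‖ = |2 * (χ (g ^ (n + 1))).re| * I (x * β) / x := by
        rw [plethTerm_eq_ofReal, Complex.norm_real, Real.norm_eq_abs, abs_div, abs_mul,
          abs_of_nonneg (hI0 _ hxβ), abs_of_pos hx]
    _ ≤ 2 * D * (C * (x * β) ^ (1 - s)) / x := by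
        gcongr
        · exact hI0 _ hxβ
        · exact hIC _ hxβ
    _ = 2 * D * C * β ^ (1 - s) * x ^ (-s) := by
        rw [Real.mul_rpow hx.le hβ.le, show -s = 1 - s - 1 by ring, Real.rpow_sub_one hx.ne']
        ring

variable (χ I) in
lemma norm_plethZ (β : ℝ) (g : G) :
    ‖plethZ χ I β g‖ =
      Real.exp (∑' n : ℕ, 2 * (χ (g ^ (n + 1))).re * I ((n + 1) * β) / (n + 1)) := by
  simp_rw [plethZ, Complex.norm_exp, plethTerm_eq_ofReal, ← Complex.ofReal_tsum,
    Complex.ofReal_re]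

/-- Since `Re χ` is maximal at `1`, every term of the exponent of `Z(β, g) / Z(β, 1)` is
nonpositive, and the first one (`n = 0` here) alone already gives the bound. -/
lemma norm_plethZ_div_plethZ_one_le (hχ1 : ∀ h, (χ h).re ≤ (χ 1).re)
    (hI0 : ∀ β, 0 < β → 0 ≤ I β) {β : ℝ} (hβ : 0 < β)
    (hsum : ∀ g, Summable fun n => ‖plethTerm χ I β g n‖) (g : G) :
    ‖plethZ χ I β g / plethZ χ I β 1‖ ≤ Real.exp (-(2 * ((χ 1).re - (χ g).re) * I β)) := by
  set a : G → ℕ → ℝ := fun h n => 2 * (χ (h ^ (n + 1))).re * I ((n + 1) * β) / (n + 1)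
  have ha_sum : ∀ h, Summable (a h) := fun h =>
    (hsum h).of_norm.mapL Complex.reCLM |>.congr fun n => by
      simp only [Complex.reCLM_apply, plethTerm_eq_ofReal, Complex.ofReal_re, a]
  have hdiff_nonpos : ∀ n, a g (n + 1) - a 1 (n + 1) ≤ 0 := fun n => by
    have hxβ : 0 < ((n + 1 : ℕ) + 1 : ℝ) * β := by positivity
    simp only [a, one_pow, sub_nonpos]
    gcongr 2 * ?_ * _ / _
    · exact hI0 _ hxβ
    · exact hχ1 _
  have hexponent : ∑' n, (a g n - a 1 n) ≤ -(2 * ((χ 1).re - (χ g).re) * I β) := by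
    rw [((ha_sum g).sub (ha_sum 1)).tsum_eq_zero_add]
    have htail : ∑' n, (a g (n + 1) - a 1 (n + 1)) ≤ 0 := tsum_nonpos hdiff_nonpos
    have hhead : a g 0 - a 1 0 = -(2 * ((χ 1).re - (χ g).re) * I β) := by
      simp only [a, zero_add, pow_one, Nat.cast_zero, one_mul, div_one]
      ring
    linarith
  rw [norm_div, norm_plethZ, norm_plethZ, ← Real.exp_sub, ← (ha_sum g).tsum_sub (ha_sum 1)]
  exact Real.exp_le_exp.2 hexponent

lemma tendsto_plethZ_div_plethZ_one (hχ1 : ∀ h, (χ h).re ≤ (χ 1).re)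
    (hI0 : ∀ β, 0 < β → 0 ≤ I β) (hItop : Tendsto I (𝓝[>] 0) atTop)
    (hsum : ∀ β, 0 < β → ∀ g, Summable fun n => ‖plethTerm χ I β g n‖) {g : G}
    (hg : (χ g).re < (χ 1).re) :
    Tendsto (fun β => plethZ χ I β g / plethZ χ I β 1) (𝓝[>] 0) (𝓝 0) := by
  have hgap : 0 < 2 * ((χ 1).re - (χ g).re) := by linarith
  have hbound : Tendsto (fun β => Real.exp (-(2 * ((χ 1).re - (χ g).re) * I β))) (𝓝[>] 0)
      (𝓝 0) :=
    Real.tendsto_exp_atBot.comp <| tendsto_neg_atTop_atBot.comp <| hItop.const_mul_atTop hgap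
  refine squeeze_zero_norm' ?_ hbound
  filter_upwards [self_mem_nhdsWithin] with β (hβ : 0 < β)
  exact norm_plethZ_div_plethZ_one_le hχ1 hI0 hβ (hsum β hβ) g

end PlethysticExponential

theorem pleth_reduced_partition_limit_general
    {G : Type*} [Group G] [Fintype G]
    {V : Type*} [AddCommGroup V] [Module ℂ V] [FiniteDimensional ℂ V]
    (ρ : Representation ℂ G V) (hfaith : Function.Injective ρ)
    (d : ℕ) (hd : 2 ≤ d) (I : ℝ → ℝ)
    (hI0 : ∀ β : ℝ, 0 < β → 0 ≤ I β)
    (hIC : ∃ C : ℝ, 0 < C ∧ ∀ β : ℝ, 0 < β → I β ≤ C * β ^ (1 - (d : ℝ)))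
    (c : ℝ) (hc : 0 < c)
    (hIlim : Filter.Tendsto (fun β : ℝ => β ^ (d - 1) * I β)
      (nhdsWithin 0 (Set.Ioi 0)) (nhds c))
    {W : Type*} [AddCommGroup W] [Module ℂ W] [FiniteDimensional ℂ W]
    (α : Representation ℂ G W) :
    (∀ β : ℝ, 0 < β → ∀ g : G,
      Summable (fun n : ℕ =>
        ‖plethTerm (fun h => LinearMap.trace ℂ V (ρ h)) I β g n‖)) ∧
    Filter.Tendsto
      (fun β : ℝ =>
        (((Module.finrank ℂ W : ℂ) / (Fintype.card G : ℂ)) *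
            ∑ g : G, star (LinearMap.trace ℂ W (α g)) *
              plethZ (fun h => LinearMap.trace ℂ V (ρ h)) I β g) /
          plethZ (fun h => LinearMap.trace ℂ V (ρ h)) I β 1)
      (nhdsWithin 0 (Set.Ioi 0))
      (nhds ((Module.finrank ℂ W : ℂ) ^ 2 / (Fintype.card G : ℂ))) := by
  classical
  obtain ⟨C, -, hCle⟩ := hIC
  set χ : G → ℂ := fun h => LinearMap.trace ℂ V (ρ h)
  have hχ1 : χ 1 = Module.finrank ℂ V := by simp [χ]
  have hχ_le : ∀ h, (χ h).re ≤ (χ 1).re := fun h => by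
    simpa [hχ1] using (Complex.re_le_norm _).trans (ρ.norm_trace_le_finrank h)
  have hsum : ∀ β : ℝ, 0 < β → ∀ g : G, Summable fun n => ‖plethTerm χ I β g n‖ :=
    fun β hβ => summable_norm_plethTerm ρ.norm_trace_le_finrank hI0
      (by exact_mod_cast hd : (1 : ℝ) < d) hCle hβ
  have hItop := tendsto_atTop_of_tendsto_pow_mul (by omega : d - 1 ≠ 0) hc hIlim
  have hratio : ∀ g, Tendsto (fun β => plethZ χ I β g / plethZ χ I β 1) (𝓝[>] 0)
      (𝓝 (if g = 1 then 1 else 0)) := fun g => by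
    split_ifs with hg
    · subst hg
      exact tendsto_const_nhds.congr fun β => (div_self (Complex.exp_ne_zero _)).symm
    · refine tendsto_plethZ_div_plethZ_one hχ_le hI0 hItop hsum ?_
      simpa [hχ1] using ρ.re_trace_lt_finrank fun h => hg (hfaith (h.trans (map_one ρ).symm))
  have hlim := (tendsto_finsetSum Finset.univ fun g _ =>
    (hratio g).const_mul (star (LinearMap.trace ℂ W (α g)))).const_mul
      ((Module.finrank ℂ W : ℂ) / Fintype.card G)
  simp only [mul_ite, mul_one, mul_zero, Finset.sum_ite_eq', Finset.mem_univ, if_true, map_one,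
    LinearMap.trace_one, star_natCast] at hlim
  refine ⟨hsum, ?_⟩
  convert hlim using 2 with β
  · rw [mul_div_assoc, Finset.sum_div]
    simp only [mul_div_assoc]
  · ring

/-- Let `χ` be the character of a faithful finite-dimensional complex
representation of a finite group `G`, `d ≥ 2`, and let `I : (0,∞) → ℝ` be a single-particle
partition function with `I ≥ 0`, `I(β) ≤ C β^{1-d}` and `β^{d-1} I(β) → c > 0` as `β → 0⁺`.
Then the series defining the plethystic exponential converges absolutely, and for every
irreducible complex representation `α` of `G` the reduced partition function satisfies
`[(dim α/|G|) Σ_g conj(χ_α g) Z(β, g)] / Z(β, 1) → dim(α)²/|G|` as `β → 0⁺`. -/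
theorem pleth_reduced_partition_limit
    {G : Type*} [Group G] [Fintype G]
    {V : Type*} [AddCommGroup V] [Module ℂ V] [FiniteDimensional ℂ V]
    (ρ : Representation ℂ G V) (hfaith : Function.Injective ρ)
    (d : ℕ) (hd : 2 ≤ d) (I : ℝ → ℝ)
    (hI0 : ∀ β : ℝ, 0 < β → 0 ≤ I β)
    (hIC : ∃ C : ℝ, 0 < C ∧ ∀ β : ℝ, 0 < β → I β ≤ C * β ^ (1 - (d : ℝ)))
    (c : ℝ) (hc : 0 < c)
    (hIlim : Filter.Tendsto (fun β : ℝ => β ^ (d - 1) * I β)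
      (nhdsWithin 0 (Set.Ioi 0)) (nhds c))
    {W : Type*} [AddCommGroup W] [Module ℂ W] [FiniteDimensional ℂ W]
    (α : Representation ℂ G W)
    (hα : IsSimpleModule (MonoidAlgebra ℂ G) α.asModule) :
    (∀ β : ℝ, 0 < β → ∀ g : G,
      Summable (fun n : ℕ =>
        ‖plethTerm (fun h => LinearMap.trace ℂ V (ρ h)) I β g n‖)) ∧
    Filter.Tendsto
      (fun β : ℝ =>
        (((Module.finrank ℂ W : ℂ) / (Fintype.card G : ℂ)) *
            ∑ g : G, star (LinearMap.trace ℂ W (α g)) *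
              plethZ (fun h => LinearMap.trace ℂ V (ρ h)) I β g) /
          plethZ (fun h => LinearMap.trace ℂ V (ρ h)) I β 1)
      (nhdsWithin 0 (Set.Ioi 0))
      (nhds ((Module.finrank ℂ W : ℂ) ^ 2 / (Fintype.card G : ℂ))) :=
  pleth_reduced_partition_limit_general ρ hfaith d hd I hI0 hIC c hc hIlim α
end
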